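/- Let ι : X → X̃ be an extension of a Lorentzian pre-length space, γ̃ : [0,1] → X̃ a timelike maximizer with γ̃(0) = ι(q) ∈ ι(X), and t ∈ (0,1] minimal with γ̃(t) ∉ ι(X). Then the curve γ = ι⁻¹ ∘ γ̃|_{[0,t)} is a timelike curve in X of finite τ-length: L_τ(γ) = lim_{s↗t} τ̃(ι(q), γ̃(s)) ≤ τ̃(ι(q), γ̃(t)) < ∞, provided τ̃(ι(q), γ̃(1)) < ∞. -/

import Mathlib

/-!
Since `ι` preserves `ℓ`, the curve `γ = ι⁻¹ ∘ γ̃` has on `[0, s]`, `s < t`, the same `τ`-length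
as `γ̃`, and this is `τ̃(ι q, γ̃ s)` because an initial segment of a maximizer with finite
endpoint separation is again a maximizer. Along the causal curve `γ̃` the map
`s ↦ τ̃(ι q, γ̃ s)` is monotone, which bounds these lengths by
`τ̃(ι q, γ̃ t) ≤ τ̃(ι q, γ̃ 1) < ∞`.
-/

open Set

/-- A Lorentzian pre-length space: a set `X` with an extended time separation
function `ell : X × X → {-∞} ∪ [0,∞]` (modelled as `EReal` whose values are either
`⊥ = -∞` or nonnegative) satisfying the reverse triangle inequality (with the
convention `-∞ + ∞ = -∞`, which is `EReal` addition) and `ell x x ≥ 0`. -/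
structure LPLS (X : Type*) where
  ell : X → X → EReal
  range_cond : ∀ x y, ell x y = ⊥ ∨ 0 ≤ ell x y
  rev_tri : ∀ x y z, ell x y + ell y z ≤ ell x z
  refl_nonneg : ∀ x, 0 ≤ ell x x

namespace LPLS

variable {X : Type*}

/-- The causal relation `x ≤ y` iff `ℓ(x,y) ≥ 0`. -/
def causal (L : LPLS X) (x y : X) : Prop := 0 ≤ L.ell x y

/-- The chronological (timelike) relation `x ≪ y` iff `ℓ(x,y) > 0`. -/
def chron (L : LPLS X) (x y : X) : Prop := 0 < L.ell x y

/-- The time separation function `τ = max(0, ℓ)`. -/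
noncomputable def tau (L : LPLS X) (x y : X) : EReal := max 0 (L.ell x y)

/-- The chronological future `I⁺(x)`. -/
def Iplus (L : LPLS X) (x : X) : Set X := {z | L.chron x z}

/-- The chronological past `I⁻(x)`. -/
def Iminus (L : LPLS X) (x : X) : Set X := {z | L.chron z x}

/-- A causal curve on `[a,b]`: continuous and totally ordered by `≤`. -/
def IsCausalCurve [TopologicalSpace X] (L : LPLS X) (γ : ℝ → X) (a b : ℝ) : Prop :=
  a ≤ b ∧ ContinuousOn γ (Icc a b) ∧
    ∀ ⦃s t : ℝ⦄, s ∈ Icc a b → t ∈ Icc a b → s < t → L.causal (γ s) (γ t)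

/-- A timelike curve on `[a,b]`: continuous and totally ordered by `≪`. -/
def IsTimelikeCurve [TopologicalSpace X] (L : LPLS X) (γ : ℝ → X) (a b : ℝ) : Prop :=
  a ≤ b ∧ ContinuousOn γ (Icc a b) ∧
    ∀ ⦃s t : ℝ⦄, s ∈ Icc a b → t ∈ Icc a b → s < t → L.chron (γ s) (γ t)

/-- A curve is null on `[a,b]` if no two of its points are chronologically related. -/
def IsNullOn (L : LPLS X) (γ : ℝ → X) (a b : ℝ) : Prop :=
  ∀ ⦃s t : ℝ⦄, s ∈ Icc a b → t ∈ Icc a b → s < t → ¬ L.chron (γ s) (γ t)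

/-- The `τ`-length of a curve on `[a,b]`:
`L_τ(γ) = inf { Σ τ(γ(t_{i-1}), γ(t_i)) : a = t₀ < t₁ < … < t_N = b }`. -/
noncomputable def len (L : LPLS X) (γ : ℝ → X) (a b : ℝ) : EReal :=
  ⨅ (N : ℕ) (t : Fin (N + 1) → ℝ) (_ : StrictMono t) (_ : t 0 = a)
      (_ : t (Fin.last N) = b),
    ∑ i : Fin N, L.tau (γ (t i.castSucc)) (γ (t i.succ))

/-- A (causal) maximizer: a causal curve whose length realizes the time separation
of its endpoints. -/
def IsMaximizer [TopologicalSpace X] (L : LPLS X) (γ : ℝ → X) (a b : ℝ) : Prop :=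
  L.IsCausalCurve γ a b ∧ L.len γ a b = L.tau (γ a) (γ b)

/-- Regularity: every causal maximizer is either timelike or null. -/
def Regular [TopologicalSpace X] (L : LPLS X) : Prop :=
  ∀ (γ : ℝ → X) (a b : ℝ), a < b → L.IsMaximizer γ a b →
    L.IsTimelikeCurve γ a b ∨ L.IsNullOn γ a b

/-- The topology is finer than the chronological topology: all `I±(x)` are open. -/
def ChronOpen [TopologicalSpace X] (L : LPLS X) : Prop :=
  ∀ x : X, IsOpen (L.Iplus x) ∧ IsOpen (L.Iminus x)

/-- Locally distinguishing: distinct points are distinguished by their futures or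
pasts within every common neighbourhood. -/
def LocallyDistinguishing [TopologicalSpace X] (L : LPLS X) : Prop :=
  ∀ ⦃x y : X⦄, x ≠ y → ∀ U : Set X, U ∈ nhds x → U ∈ nhds y →
    L.Iplus x ∩ U ≠ L.Iplus y ∩ U ∨ L.Iminus x ∩ U ≠ L.Iminus y ∩ U

/-- Not locally timelike isolating: every neighbourhood of every point meets its
chronological future and past. -/
def NotLocallyIsolating [TopologicalSpace X] (L : LPLS X) : Prop :=
  ∀ x : X, ∀ U ∈ nhds x, (L.Iplus x ∩ U).Nonempty ∧ (L.Iminus x ∩ U).Nonempty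

/-- The push-up property. -/
def PushUp (L : LPLS X) : Prop :=
  (∀ ⦃x y z : X⦄, L.chron x y → L.causal y z → L.chron x z) ∧
  (∀ ⦃x y z : X⦄, L.causal x y → L.chron y z → L.chron x z)

end LPLS

/-- An extension of a Lorentzian pre-length space `(X, L)`: a connected
Lorentzian pre-length space `(Y, L')` with a homeomorphism `ι` of `X` onto a
proper open subset of `Y` preserving the extended time separation. -/
def IsExtension {X Y : Type*} [TopologicalSpace X] [TopologicalSpace Y]
    (L : LPLS X) (L' : LPLS Y) (ι : X → Y) : Prop :=
  ConnectedSpace Y ∧ Topology.IsOpenEmbedding ι ∧ Set.range ι ≠ Set.univ ∧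
  ∀ x y : X, L'.ell (ι x) (ι y) = L.ell x y

/-- The extension `(Y, L', ι)` has no spacelike boundary: no point of `Y` is
`-∞`-related to all of `ι(X)` in both time directions. -/
def NoSpacelikeBoundary {X Y : Type*} (L' : LPLS Y) (ι : X → Y) : Prop :=
  ¬ ∃ p : Y, ∀ x : X, L'.ell p (ι x) = ⊥ ∧ L'.ell (ι x) p = ⊥

/-- Weakly normal: every point `p` has a neighborhood `U` on which `τ` is
finite, causally related distinct points of `U` are joined by maximizers, and
`I⁺(p) ∩ U`, `I⁻(p) ∩ U` are nonempty. -/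
def WeaklyNormal {X : Type*} [TopologicalSpace X] (L : LPLS X) : Prop :=
  ∀ p : X, ∃ U ∈ nhds p,
    (∀ x ∈ U, ∀ y ∈ U, L.tau x y ≠ ⊤) ∧
    (∀ x ∈ U, ∀ y ∈ U, L.causal x y → x ≠ y →
      ∃ γ : ℝ → X, L.IsMaximizer γ 0 1 ∧ γ 0 = x ∧ γ 1 = y) ∧
    (L.Iplus p ∩ U).Nonempty ∧ (L.Iminus p ∩ U).Nonempty

namespace LPLS

variable {X Y : Type*} (L : LPLS X)

theorem ell_le_tau (x y : X) : L.ell x y ≤ L.tau x y := le_max_right _ _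

theorem tau_eq_ell_of_causal {x y : X} (h : L.causal x y) : L.tau x y = L.ell x y :=
  max_eq_right h

theorem ell_le_ell_of_causal {y z : X} (x : X) (h : L.causal y z) :
    L.ell x y ≤ L.ell x z :=
  (le_add_of_nonneg_right h).trans (L.rev_tri x y z)

theorem tau_le_tau_of_causal {y z : X} (x : X) (h : L.causal y z) :
    L.tau x y ≤ L.tau x z :=
  max_le_max le_rfl (L.ell_le_ell_of_causal x h)

theorem tau_add_tau_le_of_causal {x y z : X} (hxy : L.causal x y) (hyz : L.causal y z) :
    L.tau x y + L.tau y z ≤ L.tau x z := by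
  rw [L.tau_eq_ell_of_causal hxy, L.tau_eq_ell_of_causal hyz]
  exact (L.rev_tri x y z).trans (L.ell_le_tau x z)

/-- Cancelling the finite value `ℓ(x,y)` in `ℓ(x,x) + ℓ(x,y) ≤ ℓ(x,y)` gives `ℓ(x,x) ≤ 0`. -/
theorem tau_self_eq_zero {x y : X} (hxy : L.causal x y) (hfin : L.ell x y ≠ ⊤) :
    L.tau x x = 0 := by
  have hbot : L.ell x y ≠ ⊥ := ne_bot_of_le_ne_bot (by simp) hxy
  lift L.ell x y to ℝ using ⟨hfin, hbot⟩ with r hr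
  have hself : L.ell x x + r ≤ 0 + r := by simpa [hr] using L.rev_tri x x y
  exact max_eq_left ((EReal.addLECancellable_coe r).add_le_add_iff_right.1 hself)

section Curves

variable {L}

theorem IsTimelikeCurve.mono [TopologicalSpace X] {γ : ℝ → X} {a b c : ℝ}
    (h : L.IsTimelikeCurve γ a c) (hab : a ≤ b) (hbc : b ≤ c) : L.IsTimelikeCurve γ a b :=
  have hsub : Icc a b ⊆ Icc a c := Icc_subset_Icc le_rfl hbc
  ⟨hab, h.2.1.mono hsub, fun _ _ hs ht hst => h.2.2 (hsub hs) (hsub ht) hst⟩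

theorem IsCausalCurve.causal_of_le [TopologicalSpace X] {γ : ℝ → X} {a b s t : ℝ}
    (h : L.IsCausalCurve γ a b) (hs : s ∈ Icc a b) (ht : t ∈ Icc a b) (hst : s ≤ t) :
    L.causal (γ s) (γ t) := by
  rcases hst.eq_or_lt with rfl | hlt
  · exact L.refl_nonneg _
  · exact h.2.2 hs ht hlt

end Curves

section Length

variable {γ : ℝ → X} {a b c : ℝ}

theorem mem_Icc_of_partition {N : ℕ} {p : Fin (N + 1) → ℝ} (hp : Monotone p)
    (h0 : p 0 = a) (hN : p (Fin.last N) = b) (i : Fin (N + 1)) : p i ∈ Icc a b :=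
  ⟨h0 ▸ hp (Fin.zero_le i), hN ▸ hp (Fin.le_last i)⟩

theorem len_le_sum {N : ℕ} {p : Fin (N + 1) → ℝ} (hp : StrictMono p) (h0 : p 0 = a)
    (hN : p (Fin.last N) = b) :
    L.len γ a b ≤ ∑ i : Fin N, L.tau (γ (p i.castSucc)) (γ (p i.succ)) :=
  iInf_le_of_le N <| iInf_le_of_le p <| iInf_le_of_le hp <| iInf_le_of_le h0 <|
    iInf_le_of_le hN le_rfl

theorem le_len {e : EReal}
    (h : ∀ (N : ℕ) (p : Fin (N + 1) → ℝ), StrictMono p → p 0 = a → p (Fin.last N) = b →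
      e ≤ ∑ i : Fin N, L.tau (γ (p i.castSucc)) (γ (p i.succ))) :
    e ≤ L.len γ a b :=
  le_iInf fun N => le_iInf fun p => le_iInf fun hp => le_iInf fun h0 => le_iInf (h N p hp h0)

theorem len_nonneg : 0 ≤ L.len γ a b :=
  L.le_len fun _ _ _ _ _ => Finset.sum_nonneg fun _ _ => le_max_left _ _

theorem len_self : L.len γ a a = 0 := by
  refine le_antisymm ?_ L.len_nonneg
  simpa using L.len_le_sum (γ := γ) (N := 0) (p := fun _ => a)
    (Subsingleton.strictMono (α := Fin 1) _) rfl rfl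

theorem len_le_tau (hab : a < b) : L.len γ a b ≤ L.tau (γ a) (γ b) := by
  simpa using L.len_le_sum (N := 1) (p := ![a, b]) (γ := γ)
    (Fin.strictMono_iff_lt_succ.2 fun i => by fin_cases i; simpa) rfl rfl

/-- Appending the point `c` to a partition of `[a, b]` gives a partition of `[a, c]`. -/
theorem len_le_sum_add_tau {N : ℕ} {p : Fin (N + 1) → ℝ} (hp : StrictMono p)
    (h0 : p 0 = a) (hN : p (Fin.last N) = b) (hbc : b < c) :
    L.len γ a c ≤
      (∑ i : Fin N, L.tau (γ (p i.castSucc)) (γ (p i.succ))) + L.tau (γ b) (γ c) := by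
  have hsnoc : StrictMono (Fin.snoc p c : Fin (N + 2) → ℝ) := by
    simpa only [Fin.insertNth_last'] using Fin.strictMono_insertNth_last hp c (hN ▸ hbc)
  have h0' : (Fin.snoc p c : Fin (N + 2) → ℝ) 0 = a := by
    simpa only [← Fin.castSucc_zero, Fin.snoc_castSucc] using h0
  refine (L.len_le_sum hsnoc h0' (Fin.snoc_last _ _)).trans_eq ?_
  simp only [Fin.sum_univ_castSucc, Fin.snoc_castSucc, Fin.succ_castSucc, Fin.succ_last,
    Fin.snoc_last, hN]

theorem len_congr {γ' : ℝ → X} (h : EqOn γ γ' (Icc a b)) : L.len γ a b = L.len γ' a b := by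
  refine iInf_congr fun N => iInf_congr fun p => iInf_congr fun hp => iInf_congr fun h0 =>
    iInf_congr fun hN => Finset.sum_congr rfl fun i _ => ?_
  have hmem := mem_Icc_of_partition hp.monotone h0 hN
  rw [h (hmem _), h (hmem _)]

end Length

section Embedding

variable {L} {L' : LPLS Y} {ι : X → Y}

theorem tau_comp (hE : ∀ x y, L'.ell (ι x) (ι y) = L.ell x y) (x y : X) :
    L'.tau (ι x) (ι y) = L.tau x y := by
  simp only [tau, hE]

theorem len_comp (hE : ∀ x y, L'.ell (ι x) (ι y) = L.ell x y) (γ : ℝ → X) (a b : ℝ) :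
    L'.len (ι ∘ γ) a b = L.len γ a b := by
  simp only [len, Function.comp, tau_comp hE]

theorem IsTimelikeCurve.of_comp [TopologicalSpace X] [TopologicalSpace Y]
    (hE : ∀ x y, L'.ell (ι x) (ι y) = L.ell x y) (hι : Topology.IsInducing ι)
    {γ : ℝ → X} {γ' : ℝ → Y} {a b : ℝ}
    (hγ : EqOn (ι ∘ γ) γ' (Icc a b)) (h : L'.IsTimelikeCurve γ' a b) :
    L.IsTimelikeCurve γ a b :=
  ⟨h.1, hι.continuousOn_iff.2 (h.2.1.congr hγ), fun s t hs ht hst => by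
    simpa only [chron, ← hE, ← Function.comp_apply (f := ι), hγ hs, hγ ht]
      using h.2.2 hs ht hst⟩

end Embedding

section Maximizer

variable {L}

/-- For a partition `P` of `[a, b]`,
`τ(γ a, γ b) + τ(γ b, γ c) ≤ τ(γ a, γ c) = L_τ(γ; a, c) ≤ Σ_P + τ(γ b, γ c)`,
and the middle term `τ(γ b, γ c)` is finite, so it cancels. -/
theorem IsMaximizer.len_eq_tau_of_lt [TopologicalSpace X] {γ : ℝ → X} {a b c : ℝ}
    (hmax : L.IsMaximizer γ a c) (hfin : L.tau (γ a) (γ c) ≠ ⊤) (hab : a < b) (hbc : b < c) :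
    L.len γ a b = L.tau (γ a) (γ b) := by
  refine le_antisymm (L.len_le_tau hab) (L.le_len fun N p hp h0 hN => ?_)
  have hcaus := hmax.1.2.2
  have hamem : a ∈ Icc a c := ⟨le_rfl, (hab.trans hbc).le⟩
  have hbmem : b ∈ Icc a c := ⟨hab.le, hbc.le⟩
  have hcmem : c ∈ Icc a c := ⟨(hab.trans hbc).le, le_rfl⟩
  have htri := L.tau_add_tau_le_of_causal (hcaus hamem hbmem hab) (hcaus hbmem hcmem hbc)
  have hbc_top : L.tau (γ b) (γ c) ≠ ⊤ :=
    ne_top_of_le_ne_top hfin ((le_add_of_nonneg_left (le_max_left _ _)).trans htri)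
  lift L.tau (γ b) (γ c) to ℝ using ⟨hbc_top, ne_bot_of_le_ne_bot (by simp) (le_max_left _ _)⟩
    with r hr
  refine (EReal.addLECancellable_coe r).add_le_add_iff_right.1 ?_
  calc L.tau (γ a) (γ b) + r ≤ L.tau (γ a) (γ c) := hr ▸ htri
    _ = L.len γ a c := hmax.2.symm
    _ ≤ _ := hr ▸ L.len_le_sum_add_tau hp h0 hN hbc

theorem IsMaximizer.len_eq_tau [TopologicalSpace X] {γ : ℝ → X} {a b c : ℝ}
    (hmax : L.IsMaximizer γ a c) (hfin : L.tau (γ a) (γ c) ≠ ⊤) (hb : b ∈ Icc a c) :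
    L.len γ a b = L.tau (γ a) (γ b) := by
  rcases hb.1.eq_or_lt with rfl | hab
  · rcases hb.2.eq_or_lt with rfl | hbc
    · exact hmax.2
    · rw [L.len_self, L.tau_self_eq_zero (hmax.1.2.2 hb ⟨hbc.le, le_rfl⟩ hbc)
        (ne_top_of_le_ne_top hfin (L.ell_le_tau _ _))]
  · rcases hb.2.eq_or_lt with rfl | hbc
    · exact hmax.2
    · exact hmax.len_eq_tau_of_lt hfin hab hbc

end Maximizer

end LPLS

theorem stmt15_general {X Y : Type*} [TopologicalSpace X] [TopologicalSpace Y]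
    (L : LPLS X) (L' : LPLS Y) (ι : X → Y) (hext : IsExtension L L' ι)
    (γ' : ℝ → Y) (q : X) (t : ℝ)
    (hmax : L'.IsMaximizer γ' 0 1) (htl : L'.IsTimelikeCurve γ' 0 1)
    (h0 : γ' 0 = ι q) (ht : t ∈ Set.Ioc (0:ℝ) 1)
    (hin : ∀ s ∈ Set.Ico (0:ℝ) t, γ' s ∈ Set.range ι)
    (hfin : L'.tau (ι q) (γ' 1) ≠ ⊤) :
    ∃ γ : ℝ → X,
      (∀ s ∈ Set.Ico (0:ℝ) t, ι (γ s) = γ' s) ∧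
      (∀ s ∈ Set.Ioo (0:ℝ) t, L.IsTimelikeCurve γ 0 s) ∧
      (⨆ (s : ℝ) (_ : s ∈ Set.Ico (0:ℝ) t), L.len γ 0 s) =
        (⨆ (s : ℝ) (_ : s ∈ Set.Ico (0:ℝ) t), L'.tau (ι q) (γ' s)) ∧
      (⨆ (s : ℝ) (_ : s ∈ Set.Ico (0:ℝ) t), L.len γ 0 s) ≤ L'.tau (ι q) (γ' t) ∧
      L'.tau (ι q) (γ' t) ≠ ⊤ := by
  obtain ⟨-, hemb, -, hE⟩ := hext
  obtain ⟨ht0, ht1⟩ := ht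
  have : Nonempty X := ⟨q⟩
  set γ : ℝ → X := Function.invFun ι ∘ γ'
  have hγ : ∀ s ∈ Ico (0:ℝ) t, ι (γ s) = γ' s := fun s hs => Function.invFun_eq (hin s hs)
  have hEqOn : ∀ s < t, EqOn (ι ∘ γ) γ' (Icc 0 s) := fun s hs u hu =>
    hγ u ⟨hu.1, hu.2.trans_lt hs⟩
  rw [← h0] at hfin ⊢
  have hlen : ∀ s ∈ Ico (0:ℝ) t, L.len γ 0 s = L'.tau (γ' 0) (γ' s) := fun s hs => by
    rw [← LPLS.len_comp hE, L'.len_congr (hEqOn s hs.2)]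
    exact hmax.len_eq_tau hfin ⟨hs.1, hs.2.le.trans ht1⟩
  have htmem : t ∈ Icc (0:ℝ) 1 := ⟨ht0.le, ht1⟩
  have hmono : ∀ s ∈ Icc (0:ℝ) 1, ∀ s' ∈ Icc (0:ℝ) 1, s ≤ s' →
      L'.tau (γ' 0) (γ' s) ≤ L'.tau (γ' 0) (γ' s') := fun s hs s' hs' hss' =>
    L'.tau_le_tau_of_causal _ (hmax.1.causal_of_le hs hs' hss')
  have hsup := iSup_congr fun s => iSup_congr (hlen s)
  refine ⟨γ, hγ, fun s hs => (htl.mono hs.1.le (hs.2.le.trans ht1)).of_comp hE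
    hemb.isInducing (hEqOn s hs.2), hsup, hsup ▸ iSup₂_le fun s hs => ?_,
    ne_top_of_le_ne_top hfin (hmono t htmem 1 ⟨zero_le_one, le_rfl⟩ ht1)⟩
  exact hmono s ⟨hs.1, hs.2.le.trans ht1⟩ t htmem hs.2.le

/-- if `γ̃ : [0,1] → X̃` is a timelike maximizer in an extension
starting at `γ̃(0) = ι(q)` and leaving `ι(X)` for the first time at
`t ∈ (0,1]`, then `γ = ι⁻¹ ∘ γ̃|_{[0,t)}` is a timelike curve in `X` of finite
`τ`-length `L_τ(γ) = lim_{s↗t} τ̃(ι(q), γ̃(s)) ≤ τ̃(ι(q), γ̃(t)) < ∞`, provided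
`τ̃(ι(q), γ̃(1)) < ∞`. -/
theorem stmt15 {X Y : Type*} [TopologicalSpace X] [TopologicalSpace Y]
    (L : LPLS X) (L' : LPLS Y) (ι : X → Y) (hext : IsExtension L L' ι)
    (γ' : ℝ → Y) (q : X) (t : ℝ)
    (hmax : L'.IsMaximizer γ' 0 1) (htl : L'.IsTimelikeCurve γ' 0 1)
    (h0 : γ' 0 = ι q) (ht : t ∈ Set.Ioc (0:ℝ) 1)
    (hout : γ' t ∉ Set.range ι) (hin : ∀ s ∈ Set.Ico (0:ℝ) t, γ' s ∈ Set.range ι)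
    (hfin : L'.tau (ι q) (γ' 1) ≠ ⊤) :
    ∃ γ : ℝ → X,
      (∀ s ∈ Set.Ico (0:ℝ) t, ι (γ s) = γ' s) ∧
      (∀ s ∈ Set.Ioo (0:ℝ) t, L.IsTimelikeCurve γ 0 s) ∧
      (⨆ (s : ℝ) (_ : s ∈ Set.Ico (0:ℝ) t), L.len γ 0 s) =
        (⨆ (s : ℝ) (_ : s ∈ Set.Ico (0:ℝ) t), L'.tau (ι q) (γ' s)) ∧
      (⨆ (s : ℝ) (_ : s ∈ Set.Ico (0:ℝ) t), L.len γ 0 s) ≤ L'.tau (ι q) (γ' t) ∧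
      L'.tau (ι q) (γ' t) ≠ ⊤ :=
  stmt15_general L L' ι hext γ' q t hmax htl h0 ht hin hfin
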